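/- arXiv:2102.04891 — 2 statements merged into one kernel-verified Lean document; each statement's English description precedes it below -/
import Mathlib

section
/- For real z > 0, μ(z) = (1/2)·∑_{n=1}^∞ n/((n+2)(n+1)) · ∑_{k=0}^∞ 1/(z+k+1)^{n+1} (Binet's convergent double series for the Binet function). -/
/-!
The step `μ(x) - μ(x + 1) = (x + 1/2) log (1 + 1/x) - 1` comes from `Γ(x + 1) = x Γ(x)`; expanding
the logarithm in powers of `u = 1/(x + 1)` and using `(n+1)/((n+3)(n+2)) = 2/(n+3) - 1/(n+2)`
turns it into `½ ∑ₙ (n+1)/((n+3)(n+2)) u^(n+2)`, a series of nonnegative terms. Summing over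
`x = z + k` telescopes to `μ(z)`, because `μ(z + N) → 0`: at integers this is Stirling's formula,
and `log Γ(z + N) - log Γ(N) - z log N → 0` is the Euler limit formula for `log Γ`. The two
summations of the resulting nonnegative double series can then be swapped.
-/

noncomputable def binetMu (x : ℝ) : ℝ :=
  Real.log (Real.Gamma x) - (x - 1/2) * Real.log x + x - (1/2) * Real.log (2 * Real.pi)

open Real Filter Topology

noncomputable def binetCoeff (n : ℕ) : ℝ := ((n : ℝ) + 1) / (((n : ℝ) + 3) * ((n : ℝ) + 2))

lemma binetCoeff_nonneg (n : ℕ) : 0 ≤ binetCoeff n := by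
  rw [binetCoeff]; positivity

lemma hasSum_pow_add_div {u : ℝ} (hu : |u| < 1) (k : ℕ) :
    HasSum (fun n : ℕ => u ^ (n + k + 1) / ((n : ℝ) + k + 1))
      (-log (1 - u) - ∑ i ∈ Finset.range k, u ^ (i + 1) / ((i : ℝ) + 1)) := by
  simpa only [Nat.cast_add, add_right_comm _ 1 k] using
    (hasSum_nat_add_iff' k).2 (hasSum_pow_div_log_of_abs_lt_one hu)

lemma hasSum_binetCoeff_mul_pow {u : ℝ} (hu : |u| < 1) (hu0 : u ≠ 0) :
    HasSum (fun n : ℕ => binetCoeff n / 2 * u ^ (n + 2))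
      ((u⁻¹ - 1 / 2) * -log (1 - u) - 1) := by
  have h := ((hasSum_pow_add_div hu 2).mul_left u⁻¹).sub
    ((hasSum_pow_add_div hu 1).mul_left (1 / 2))
  rw [show u⁻¹ * (-log (1 - u) - ∑ i ∈ Finset.range 2, u ^ (i + 1) / ((i : ℝ) + 1)) -
      1 / 2 * (-log (1 - u) - ∑ i ∈ Finset.range 1, u ^ (i + 1) / ((i : ℝ) + 1))
      = (u⁻¹ - 1 / 2) * -log (1 - u) - 1 by
        simp only [Finset.sum_range_succ, Finset.sum_range_zero]; field_simp; ring] at h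
  refine h.congr_fun fun n => ?_
  rw [binetCoeff]
  push_cast
  field_simp
  ring

lemma binetMu_sub_binetMu_add_one {x : ℝ} (hx : 0 < x) :
    binetMu x - binetMu (x + 1) = (x + 1 / 2) * (log (x + 1) - log x) - 1 := by
  rw [binetMu, binetMu, Gamma_add_one hx.ne', log_mul hx.ne' (Gamma_pos_of_pos hx).ne']
  ring

lemma hasSum_binetMu_sub_binetMu_add_one {x : ℝ} (hx : 0 < x) :
    HasSum (fun n : ℕ => binetCoeff n / 2 * (1 / (x + 1) ^ (n + 2)))
      (binetMu x - binetMu (x + 1)) := by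
  have hx1 : 0 < x + 1 := by linarith
  have hu : |(x + 1)⁻¹| < 1 := by
    rw [abs_inv, abs_of_pos hx1]
    exact inv_lt_one_of_one_lt₀ (by linarith)
  have hlog : -log (1 - (x + 1)⁻¹) = log (x + 1) - log x := by
    rw [show 1 - (x + 1)⁻¹ = x / (x + 1) by field_simp; ring, log_div hx.ne' hx1.ne']
    ring
  have h := hasSum_binetCoeff_mul_pow hu (inv_ne_zero hx1.ne')
  rw [inv_inv, hlog, add_sub_assoc, sub_half, ← binetMu_sub_binetMu_add_one hx] at h
  simpa only [inv_pow, one_div] using h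

lemma binetMu_add_one_le {x : ℝ} (hx : 0 < x) : binetMu (x + 1) ≤ binetMu x :=
  sub_nonneg.1 <| (hasSum_binetMu_sub_binetMu_add_one hx).nonneg fun n => by
    have := binetCoeff_nonneg n
    positivity

lemma antitone_binetMu_add_natCast {x : ℝ} (hx : 0 < x) :
    Antitone fun n : ℕ => binetMu (x + n) :=
  antitone_nat_of_succ_le fun n => by
    rw [Nat.cast_succ, ← add_assoc]
    exact binetMu_add_one_le (by positivity)

lemma binetMu_natCast {n : ℕ} (hn : n ≠ 0) :
    binetMu n = log (Stirling.stirlingSeq n) - log √π := by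
  have hn0 : (0 : ℝ) < n := by positivity
  have hΓ : log (Gamma n) = log n.factorial - log n := by
    rw [← Gamma_nat_eq_factorial, Gamma_add_one hn0.ne',
      log_mul hn0.ne' (Gamma_pos_of_pos hn0).ne']
    ring
  rw [binetMu, Stirling.log_stirlingSeq_formula, hΓ, log_mul two_ne_zero hn0.ne',
    log_div hn0.ne' (exp_ne_zero 1), log_exp, log_sqrt pi_pos.le, log_mul two_ne_zero pi_pos.ne']
  ring

lemma tendsto_binetMu_natCast : Tendsto (fun n : ℕ => binetMu n) atTop (𝓝 0) := by
  have h := ((continuousAt_log (by positivity)).tendsto.comp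
    Stirling.tendsto_stirlingSeq_sqrt_pi).sub_const (log √π)
  rw [sub_self] at h
  exact h.congr' ((eventually_ne_atTop 0).mono fun n hn => (binetMu_natCast hn).symm)

lemma log_Gamma_add_one {y : ℝ} (hy : 0 < y) :
    log (Gamma (y + 1)) = log (Gamma y) + log y := by
  rw [Gamma_add_one hy.ne', log_mul hy.ne' (Gamma_pos_of_pos hy).ne', add_comm]

lemma tendsto_log_one_add_div_natCast (x : ℝ) :
    Tendsto (fun n : ℕ => log (1 + x / n)) atTop (𝓝 0) := by
  have h := (tendsto_const_div_atTop_nhds_zero_nat x).const_add 1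
  rw [add_zero] at h
  simpa only [log_one, Function.comp_def] using (continuousAt_log one_ne_zero).tendsto.comp h

lemma tendsto_log_Gamma_add_natCast_sub {x : ℝ} (hx : 0 < x) :
    Tendsto (fun n : ℕ => log (Gamma (x + n)) - log (Gamma n) - x * log n) atTop (𝓝 0) := by
  have h := ((tendsto_const_nhds (x := log (Gamma x))).sub
    (BohrMollerup.tendsto_log_gamma hx)).sub (tendsto_log_one_add_div_natCast x)
  rw [sub_self, sub_zero] at h
  refine h.congr' ((eventually_ne_atTop 0).mono fun n hn => ?_)
  have hn0 : (0 : ℝ) < n := by positivity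
  have hsum := BohrMollerup.f_add_nat_eq (f := log ∘ Gamma) log_Gamma_add_one hx (n + 1)
  simp only [Function.comp_apply] at hsum
  rw [BohrMollerup.logGammaSeq, ← Gamma_nat_eq_factorial, log_Gamma_add_one hn0,
    eq_sub_of_add_eq' hsum.symm]
  push_cast
  rw [← add_assoc x, log_Gamma_add_one (by positivity),
    show 1 + x / n = (x + n) / n by field_simp; ring, log_div (by positivity) hn0.ne']
  ring

lemma binetMu_add_sub_binetMu {x y : ℝ} (hy : 0 < y) (hxy : 0 < x + y) :
    binetMu (x + y) - binetMu y =
      (log (Gamma (x + y)) - log (Gamma y) - x * log y) - (x + y - 1 / 2) * log (1 + x / y)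
        + x := by
  rw [binetMu, binetMu, show 1 + x / y = (x + y) / y by field_simp; ring,
    log_div hxy.ne' hy.ne']
  ring

lemma tendsto_binetMu_add_natCast {x : ℝ} (hx : 0 < x) :
    Tendsto (fun n : ℕ => binetMu (x + n)) atTop (𝓝 0) := by
  have hlog : Tendsto (fun n : ℕ => (x + n - 1 / 2) * log (1 + x / n)) atTop (𝓝 x) := by
    have h := ((tendsto_mul_log_one_add_div_atTop x).comp tendsto_natCast_atTop_atTop).add
      ((tendsto_log_one_add_div_natCast x).const_mul (x - 1 / 2))
    rw [mul_zero, add_zero] at h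
    exact h.congr fun n => by simp only [Function.comp_apply]; ring
  have h := (((tendsto_log_Gamma_add_natCast_sub hx).sub hlog).add_const x).add
    tendsto_binetMu_natCast
  rw [zero_sub, neg_add_cancel, zero_add] at h
  refine h.congr' ((eventually_ne_atTop 0).mono fun n hn => ?_)
  rw [← binetMu_add_sub_binetMu (by positivity) (by positivity)]
  ring

lemma Antitone.hasSum_sub_add_one {u : ℕ → ℝ} {l : ℝ} (hu : Antitone u)
    (hl : Tendsto u atTop (𝓝 l)) : HasSum (fun n => u n - u (n + 1)) (u 0 - l) := by
  rw [hasSum_iff_tendsto_nat_of_nonneg fun n => sub_nonneg.2 (hu n.le_succ)]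
  simpa only [Finset.sum_range_sub'] using hl.const_sub (u 0)

lemma tsum_comm_of_nonneg {β γ : Type*} {f : β → γ → ℝ} (hf : ∀ b c, 0 ≤ f b c)
    (hrow : ∀ b, Summable (f b)) (hsum : Summable fun b => ∑' c, f b c) :
    ∑' c, ∑' b, f b c = ∑' b, ∑' c, f b c :=
  Summable.tsum_comm <| (summable_prod_of_nonneg fun p => hf p.1 p.2).2 ⟨hrow, hsum⟩

/-- Binet's convergent double series: indices `n, k : ℕ` correspond to `n+1 ≥ 1`
and `k ≥ 0` in the classical indexing. -/
theorem binetMu_double_series (z : ℝ) (hz : 0 < z) :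
    binetMu z =
      (1/2) * ∑' n : ℕ,
        ((n : ℝ) + 1) / (((n : ℝ) + 3) * ((n : ℝ) + 2)) *
          ∑' k : ℕ, 1 / (z + (k : ℝ) + 1) ^ (n + 2) := by
  have hrow (k : ℕ) := hasSum_binetMu_sub_binetMu_add_one (x := z + k) (by positivity)
  have htel : HasSum (fun k : ℕ => binetMu (z + k) - binetMu (z + k + 1)) (binetMu z) := by
    simpa only [Nat.cast_add_one, ← add_assoc, Nat.cast_zero, add_zero, sub_zero] using
      (antitone_binetMu_add_natCast hz).hasSum_sub_add_one (tendsto_binetMu_add_natCast hz)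
  calc binetMu z = ∑' (k : ℕ) (n : ℕ), binetCoeff n / 2 * (1 / (z + k + 1) ^ (n + 2)) := by
        rw [← htel.tsum_eq]
        exact tsum_congr fun k => (hrow k).tsum_eq.symm
    _ = ∑' (n : ℕ) (k : ℕ), binetCoeff n / 2 * (1 / (z + k + 1) ^ (n + 2)) := by
        refine (tsum_comm_of_nonneg (fun k n => ?_) (fun k => (hrow k).summable) ?_).symm
        · have := binetCoeff_nonneg n
          positivity
        · simpa only [fun k => (hrow k).tsum_eq] using htel.summable
    _ = _ := by
        rw [← tsum_mul_left]
        exact tsum_congr fun n => by rw [tsum_mul_left, binetCoeff]; ring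
end

section
/- For |x| < 1, the function x/log(1+x) has the convergent Taylor series x/log(1+x) = ∑_{m=0}^∞ (∑_{k=0}^m S_m^{(k)}/(k+1)) · x^m/m!, where S_m^{(k)} are the Stirling numbers of the first kind (with S_0^{(0)} = 1). -/
/-!
For `x > -1` one has `x / log (1 + x) = ∫₀¹ (1 + x) ^ t dt`. Expanding `(1 + x) ^ t` by the binomial
series, the `m`-th coefficient is `(t)ₘ / m!`, where the falling factorial `(t)ₘ` is the polynomial
whose coefficients are the Stirling numbers `S_m^{(k)}`. For `t ∈ [0, 1]` the binomial coefficients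
are bounded by `1`, so for `|x| < 1` the series is dominated by `∑ |x| ^ m` and may be integrated
termwise; `∫₀¹ tᵏ dt = 1 / (k + 1)` then gives the stated coefficients.
-/

/-- Signed Stirling numbers of the first kind, defined by
`∏_{i=0}^{m−1}(x − i) = ∑_{k=0}^m S_m^{(k)} x^k`. -/
noncomputable def stirlingFirst (m k : ℕ) : ℝ :=
  (∏ i ∈ Finset.range m, (Polynomial.X - Polynomial.C (i : ℝ))).coeff k

open Polynomial Finset

theorem descPochhammer_eq_prod_range {R : Type*} [CommRing R] (m : ℕ) :
    descPochhammer R m = ∏ i ∈ range m, (X - C (i : R)) := by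
  induction m with
  | zero => simp
  | succ m ih => rw [descPochhammer_succ_right, ih, prod_range_succ, map_natCast]

theorem stirlingFirst_eq_coeff_descPochhammer (m k : ℕ) :
    stirlingFirst m k = (descPochhammer ℝ m).coeff k := by
  rw [stirlingFirst, descPochhammer_eq_prod_range]

theorem Ring.choose_eq_descPochhammer_eval_div {R : Type*} [Field R] [CharZero R] (a : R) (m : ℕ) :
    Ring.choose a m = (descPochhammer R m).eval a / m.factorial := by
  rw [Ring.choose_eq_smul, ← aeval_eq_smeval, smul_eq_mul, inv_mul_eq_div]
  simp [aeval_def, eval₂_eq_eval_map]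

theorem hasSum_choose_mul_pow (a : ℝ) {x : ℝ} (hx : |x| < 1) :
    HasSum (fun m => Ring.choose a m * x ^ m) ((1 + x) ^ a) := by
  have := (Real.one_add_rpow_hasFPowerSeriesOnBall_zero (a := a)).hasSum (y := x)
    (by simpa [← ofReal_norm, Real.norm_eq_abs] using hx)
  simpa [binomialSeries, FormalMultilinearSeries.ofScalars_apply_eq, mul_comm] using this

theorem abs_descPochhammer_eval_le_factorial {t : ℝ} (ht : t ∈ Set.Icc (0 : ℝ) 1) (m : ℕ) :
    |(descPochhammer ℝ m).eval t| ≤ m.factorial := by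
  rw [descPochhammer_eval_eq_prod_range, abs_prod, ← prod_range_add_one_eq_factorial]
  push_cast
  gcongr with i
  rw [abs_le]; constructor <;> linarith [ht.1, ht.2]

theorem abs_choose_le_one {t : ℝ} (ht : t ∈ Set.Icc (0 : ℝ) 1) (m : ℕ) :
    |Ring.choose t m| ≤ 1 := by
  rw [Ring.choose_eq_descPochhammer_eval_div, abs_div, Nat.abs_cast, div_le_one (by positivity)]
  exact abs_descPochhammer_eval_le_factorial ht m

theorem integral_zero_one_eval (p : ℝ[X]) {n : ℕ} (hn : p.natDegree < n) :
    ∫ t in (0 : ℝ)..1, p.eval t = ∑ k ∈ range n, p.coeff k / (k + 1) := by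
  simp_rw [eval_eq_sum_range' hn]
  rw [intervalIntegral.integral_finsetSum (f := fun k t => p.coeff k * t ^ k)
    fun k _ => (continuous_const.mul (continuous_pow k)).intervalIntegrable _ _]
  simp [integral_pow, div_eq_mul_inv]

theorem sum_stirlingFirst_div_eq_integral (m : ℕ) :
    ∑ k ∈ range (m + 1), stirlingFirst m k / ((k : ℝ) + 1) =
      ∫ t in (0 : ℝ)..1, (descPochhammer ℝ m).eval t := by
  rw [integral_zero_one_eval (n := m + 1) _ (by rw [descPochhammer_natDegree]; omega)]
  simp_rw [stirlingFirst_eq_coeff_descPochhammer]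

theorem integral_const_rpow {b : ℝ} (hb : 0 < b) (hb1 : b ≠ 1) (u v : ℝ) :
    ∫ t in u..v, b ^ t = (b ^ v - b ^ u) / Real.log b := by
  have hlog : Real.log b ≠ 0 := Real.log_ne_zero_of_pos_of_ne_one hb hb1
  rw [intervalIntegral.integral_eq_sub_of_hasDerivAt (f := fun t => b ^ t / Real.log b)]
  · ring
  · intro t _
    simpa [hlog] using ((Real.hasStrictDerivAt_const_rpow hb t).hasDerivAt).div_const (Real.log b)
  · exact (continuous_const.rpow continuous_id fun _ => Or.inl hb.ne').intervalIntegrable _ _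

theorem integral_one_add_rpow {x : ℝ} (hx : -1 < x) :
    ∫ t in (0 : ℝ)..1, (1 + x) ^ t = if x = 0 then 1 else x / Real.log (1 + x) := by
  split_ifs with hx0
  · simp [hx0]
  · rw [integral_const_rpow (by linarith) (by simpa using hx0)]
    simp

theorem hasSum_integral_choose_mul_pow {x : ℝ} (hx : |x| < 1) :
    HasSum (fun m => ∫ t in (0 : ℝ)..1, Ring.choose t m * x ^ m)
      (∫ t in (0 : ℝ)..1, (1 + x) ^ t) := by
  refine intervalIntegral.hasSum_integral_of_dominated_convergence (fun m _ => |x| ^ m)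
    (fun m => ?measurable) (fun m => ?bound)
    (.of_forall fun _ _ => summable_geometric_of_lt_one (abs_nonneg x) hx)
    intervalIntegrable_const (.of_forall fun t _ => hasSum_choose_mul_pow t hx)
  case measurable =>
    simp_rw [Ring.choose_eq_descPochhammer_eval_div]
    exact ((Polynomial.continuous _).div_const _ |>.mul continuous_const).aestronglyMeasurable
  case bound =>
    refine .of_forall fun t ht => ?_
    rw [Set.uIoc_of_le zero_le_one] at ht
    rw [norm_mul, norm_pow, Real.norm_eq_abs]
    exact mul_le_of_le_one_left (by positivity) (abs_choose_le_one (Set.Ioc_subset_Icc_self ht) m)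

theorem taylor_x_div_log (x : ℝ) (hx : |x| < 1) :
    HasSum
      (fun m : ℕ =>
        (∑ k ∈ Finset.range (m + 1), stirlingFirst m k / ((k : ℝ) + 1)) *
          x ^ m / (m.factorial : ℝ))
      (if x = 0 then 1 else x / Real.log (1 + x)) := by
  rw [← integral_one_add_rpow (neg_lt_of_abs_lt hx)]
  convert hasSum_integral_choose_mul_pow hx using 2 with m
  simp_rw [sum_stirlingFirst_div_eq_integral, Ring.choose_eq_descPochhammer_eval_div,
    intervalIntegral.integral_mul_const, intervalIntegral.integral_div]
  ring
end
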